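/- Let X be an infinite subset of Zar(F) such that A(X) = ⋂_{V∈X} V is a local ring and J(lim X) = ⋂_{U∈lim X} 𝔪_U is nonzero. If R is a completely integrally closed domain with A(X) ⊆ R ⊆ F, then A(lim X) = ⋂_{U∈lim X} U ⊆ R. In particular, if A(X) itself is completely integrally closed, then A(X) = A(lim X). -/

import Mathlib

open Set

/-- A subring `V` of a field `F` is a valuation ring of `F` (with quotient field `F`). -/
def IsValSubring (F : Type*) [Field F] (V : Subring F) : Prop :=
  ∀ t : F, t ≠ 0 → t ∈ V ∨ t⁻¹ ∈ V

/-- The Zariski-Riemann space of the field `F`: the set of valuation rings of `F`. -/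
def Zar (F : Type*) [Field F] : Type _ := {V : Subring F // IsValSubring F V}

/-- The patch (constructible) topology on `Zar F`, generated by the sets
`{V : x ∈ V}` and `{V : y ∉ V}` for `x, y ∈ F`. -/
instance Zar.patchTopology (F : Type*) [Field F] : TopologicalSpace (Zar F) :=
  TopologicalSpace.generateFrom
    ({S | ∃ x : F, S = {V : Zar F | x ∈ V.1}} ∪ {S | ∃ y : F, S = {V : Zar F | y ∉ V.1}})

variable {F : Type*} [Field F]

/-- The maximal ideal of a valuation ring of `F`, as a subset of `F`. -/
def mIdeal (V : Zar F) : Set F := {x : F | x ∈ V.1 ∧ (x = 0 ∨ x⁻¹ ∉ V.1)}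

/-- `A(X)`: the intersection of the valuation rings in `X`, as a subset of `F`. -/
def aSet (X : Set (Zar F)) : Set F := ⋂ V ∈ X, ((V : Zar F).1 : Set F)

/-- `A(X)` as a subring of `F`. -/
def ASub (X : Set (Zar F)) : Subring F := ⨅ V ∈ X, (V : Zar F).1

/-- `J(X)`: the intersection of the maximal ideals of the valuation rings in `X`. -/
def jSet (X : Set (Zar F)) : Set F := ⋂ V ∈ X, mIdeal V

/-- The set of limit points of `X` in the patch topology of `Zar F`. -/
def limPts (X : Set (Zar F)) : Set (Zar F) :=
  {V : Zar F | ∀ U : Set (Zar F), IsOpen U → V ∈ U → ∃ W ∈ X, W ≠ V ∧ W ∈ U}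


/-- A subring `A` of `F` is completely integrally closed: every element of `F`
almost integral over `A` belongs to `A`. -/
def IsCIC (A : Subring F) : Prop :=
  ∀ t : F, (∃ a : F, a ∈ A ∧ a ≠ 0 ∧ ∀ n : ℕ, 0 < n → a * t ^ n ∈ A) → t ∈ A


/-!
The point is that `J(lim X) ⊆ A(X)`. Given this, for `t ∈ A(lim X)` and a nonzero
`a ∈ J(lim X)` every `a tⁿ` lies in `J(lim X) ⊆ A(X) ⊆ R`, so `t` is almost integral over `R`.

The patch topology is compact (an ultrafilter converges to the ring of elements lying in almost
all of its members), so if `j ∈ J(lim X)` then `j` is a nonunit in all but finitely many `V ∈ X`.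
Were `j ∉ V` for some `V ∈ X`, an iterate `m` of `x ↦ x² / (1 + x)` would make `1 / (1 + m)` and
`m / (1 + m)` two elements of `A(X)` summing to `1`, nonunits at `V` and at some other member of
`X`; this contradicts locality of `A(X)`.
-/

open Filter Function Topology

lemma Set.exists_eq_empty_of_pairwise_disjoint {α : Type*} {s : Set α} (hs : s.Finite)
    {B : ℕ → Set α} (hB : ∀ k, B k ⊆ s) (hdisj : Pairwise (Disjoint on B)) : ∃ k, B k = ∅ := by
  by_contra! hne
  choose f hf using fun k => hne k
  have hinj : Injective f := fun k l hkl => by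
    by_contra hkl'
    exact Set.disjoint_left.mp (hdisj hkl') (hf k) (hkl ▸ hf l)
  exact Set.infinite_of_injective_forall_mem hinj (fun k => hB k (hf k)) hs

lemma Set.finite_inter_of_isClosed_of_forall_not_accPt {α : Type*} [TopologicalSpace α]
    [CompactSpace α] {X C : Set α} (hC : IsClosed C) (h : ∀ x ∈ C, ¬AccPt x (𝓟 X)) :
    (X ∩ C).Finite := by
  by_contra hinf
  obtain ⟨x, hxC, hx⟩ :=
    Set.Infinite.exists_accPt_of_subset_isCompact hinf hC.isCompact Set.inter_subset_right
  exact h x hxC (hx.mono (principal_mono.2 Set.inter_subset_left))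

def sqDivOneAdd {K : Type*} [Field K] (x : K) : K := x ^ 2 / (1 + x)

namespace Valuation

variable {K Γ₀ : Type*} [Field K] [LinearOrderedCommGroupWithZero Γ₀] (v : Valuation K Γ₀)
  {x : K}

lemma map_sqDivOneAdd_lt_one (h : v x < 1) : v (sqDivOneAdd x) < 1 := by
  rw [sqDivOneAdd, map_div₀, map_one_add_of_lt v h, div_one, map_pow]
  exact pow_lt_one₀ zero_le h two_ne_zero

lemma one_lt_map_sqDivOneAdd (h : 1 < v x) : 1 < v (sqDivOneAdd x) := by
  have hx : v x ≠ 0 := (zero_lt_one.trans h).ne'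
  rw [sqDivOneAdd, map_div₀, map_pow, ← v.map_one, map_add_eq_of_lt_right v (by simpa), sq,
    mul_div_cancel_right₀ _ hx, v.map_one]
  exact h

lemma one_lt_map_sqDivOneAdd_of_lt_max (h0 : 1 + x ≠ 0) (h : v (1 + x) < max 1 (v x)) :
    1 < v (sqDivOneAdd x) := by
  have hx : v x = 1 := by
    by_contra hx
    have := v.map_add_of_distinct_val (x := 1) (y := x) (by simpa [eq_comm] using hx)
    rw [v.map_one] at this
    exact h.ne this
  rw [hx, max_self] at h
  rw [sqDivOneAdd, map_div₀, map_pow, hx, one_pow, one_div, one_lt_inv₀ (v.pos_iff.2 h0)]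
  exact h

lemma one_add_ne_zero (h : v x < 1) : 1 + x ≠ 0 := fun h0 => by
  simpa [h0] using v.map_one_add_of_lt h

lemma map_iterate_sqDivOneAdd_lt_one (h : v x < 1) (k : ℕ) : v (sqDivOneAdd^[k] x) < 1 := by
  induction k with
  | zero => exact h
  | succ k ih => rw [iterate_succ_apply']; exact v.map_sqDivOneAdd_lt_one ih

lemma one_lt_map_iterate_sqDivOneAdd (h : 1 < v x) (k : ℕ) : 1 < v (sqDivOneAdd^[k] x) := by
  induction k with
  | zero => exact h
  | succ k ih => rw [iterate_succ_apply']; exact v.one_lt_map_sqDivOneAdd ih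

lemma map_inv_one_add_le_one (h : v (1 + x) = max 1 (v x)) : v (1 + x)⁻¹ ≤ 1 := by
  have h1 : 1 ≤ v (1 + x) := h ▸ le_max_left _ _
  rw [map_inv₀]
  exact inv_le_one_of_one_le₀ h1

lemma map_mul_inv_one_add_le_one (h : v (1 + x) = max 1 (v x)) : v (x * (1 + x)⁻¹) ≤ 1 := by
  have h0 : v (1 + x) ≠ 0 := (zero_lt_one.trans_le (h ▸ le_max_left _ _)).ne'
  rw [map_mul, map_inv₀, ← div_eq_mul_inv, div_le_one₀ (zero_lt_iff.2 h0), h]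
  exact le_max_right _ _

lemma map_inv_one_add_lt_one (h : 1 < v x) : v (1 + x)⁻¹ < 1 := by
  rw [map_inv₀, map_add_eq_of_lt_right v (by simpa), inv_lt_one₀ (zero_lt_one.trans h)]
  exact h

lemma map_mul_inv_one_add_lt_one (h : v x < 1) : v (x * (1 + x)⁻¹) < 1 := by
  rwa [map_mul, map_inv₀, map_one_add_of_lt v h, inv_one, mul_one]

end Valuation

namespace Zar

def toValuationSubring (V : Zar F) : ValuationSubring F where
  toSubring := V.1
  mem_or_inv_mem' x := by
    rcases eq_or_ne x 0 with rfl | hx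
    · exact Or.inl V.1.zero_mem
    · exact V.2 x hx

noncomputable abbrev valuation (V : Zar F) : Valuation F V.toValuationSubring.ValueGroup :=
  V.toValuationSubring.valuation

variable {V : Zar F} {x : F}

lemma mem_iff_valuation_le_one : x ∈ V.1 ↔ V.valuation x ≤ 1 :=
  (V.toValuationSubring.valuation_le_one_iff x).symm

lemma mem_mIdeal_iff_valuation_lt_one : x ∈ mIdeal V ↔ V.valuation x < 1 := by
  rcases eq_or_ne x 0 with rfl | hx
  · simp [mIdeal, V.1.zero_mem]
  · simp only [mIdeal, hx, false_or, Set.mem_ofPred_eq, mem_iff_valuation_le_one, not_le,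
      ← Valuation.val_lt_one_iff _ hx]
    exact ⟨And.right, fun h => ⟨h.le, h⟩⟩

lemma isOpen_setOf_mem (x : F) : IsOpen {V : Zar F | x ∈ V.1} :=
  TopologicalSpace.GenerateOpen.basic _ (Or.inl ⟨x, rfl⟩)

lemma isOpen_setOf_notMem (x : F) : IsOpen {V : Zar F | x ∉ V.1} :=
  TopologicalSpace.GenerateOpen.basic _ (Or.inr ⟨x, rfl⟩)

lemma isClosed_setOf_one_le_valuation (x : F) : IsClosed {V : Zar F | 1 ≤ V.valuation x} := by
  rw [← isOpen_compl_iff]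
  rcases eq_or_ne x 0 with rfl | hx
  · simp
  convert (isOpen_setOf_mem x).inter (isOpen_setOf_notMem x⁻¹) using 1
  ext V
  simp [← mem_mIdeal_iff_valuation_lt_one, mIdeal, hx]

def ofUltrafilter (𝒰 : Ultrafilter (Zar F)) : Zar F where
  val :=
    { carrier := {x | ∀ᶠ V : Zar F in 𝒰, x ∈ V.1}
      zero_mem' := univ_mem' fun V : Zar F => V.1.zero_mem
      one_mem' := univ_mem' fun V : Zar F => V.1.one_mem
      add_mem' := fun ha hb => by filter_upwards [ha, hb] with (V : Zar F) using V.1.add_mem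
      mul_mem' := fun ha hb => by filter_upwards [ha, hb] with (V : Zar F) using V.1.mul_mem
      neg_mem' := fun ha => by filter_upwards [ha] with (V : Zar F) using V.1.neg_mem }
  property t ht := Ultrafilter.union_mem_iff.mp (univ_mem' fun V : Zar F => V.2 t ht)

lemma le_nhds_ofUltrafilter (𝒰 : Ultrafilter (Zar F)) :
    (𝒰 : Filter (Zar F)) ≤ 𝓝 (ofUltrafilter 𝒰) := by
  show Tendsto id (𝒰 : Filter (Zar F)) (@nhds _ (TopologicalSpace.generateFrom _) _)
  rw [TopologicalSpace.tendsto_nhds_generateFrom_iff]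
  rintro s (⟨x, rfl⟩ | ⟨y, rfl⟩) hs
  · exact hs
  · exact Ultrafilter.compl_mem_iff_notMem.mpr hs

instance : CompactSpace (Zar F) :=
  isCompact_univ_iff.mp (isCompact_iff_ultrafilter_le_nhds.mpr fun 𝒰 _ =>
    ⟨ofUltrafilter 𝒰, Set.mem_univ _, le_nhds_ofUltrafilter 𝒰⟩)

end Zar

variable {X : Set (Zar F)}

lemma mem_limPts_iff_accPt {V : Zar F} : V ∈ limPts X ↔ AccPt V (𝓟 X) := by
  rw [accPt_iff_nhds]
  constructor
  · intro h U hU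
    obtain ⟨O, hOU, hO, hVO⟩ := mem_nhds_iff.mp hU
    obtain ⟨W, hWX, hWV, hWO⟩ := h O hO hVO
    exact ⟨W, ⟨hOU hWO, hWX⟩, hWV⟩
  · intro h U hU hVU
    obtain ⟨W, ⟨hWU, hWX⟩, hWV⟩ := h U (hU.mem_nhds hVU)
    exact ⟨W, hWX, hWV, hWU⟩

lemma mem_aSet {x : F} : x ∈ aSet X ↔ ∀ V ∈ X, x ∈ V.1 := by
  simp [aSet]

lemma coe_ASub : (ASub X : Set F) = aSet X := by
  ext x
  simp [ASub, aSet]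

lemma mem_ASub {x : F} : x ∈ ASub X ↔ ∀ V ∈ X, x ∈ V.1 := by
  rw [← SetLike.mem_coe, coe_ASub, mem_aSet]

lemma mem_jSet {x : F} : x ∈ jSet X ↔ ∀ V ∈ X, V.valuation x < 1 := by
  simp [jSet, Zar.mem_mIdeal_iff_valuation_lt_one]

lemma mul_mem_jSet {a t : F} (ha : a ∈ jSet X) (ht : t ∈ aSet X) : a * t ∈ jSet X := by
  rw [mem_jSet] at ha ⊢
  intro V hV
  rw [map_mul]
  exact mul_lt_one_of_lt_of_le (ha V hV) (Zar.mem_iff_valuation_le_one.mp (mem_aSet.mp ht V hV))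

lemma exists_ne_zero_mem_jSet (hJ : jSet X ≠ {0}) : ∃ a ∈ jSet X, a ≠ 0 := by
  by_contra! h
  exact hJ (Set.eq_singleton_iff_unique_mem.mpr ⟨mem_jSet.mpr fun V _ => by simp, h⟩)

lemma aSet_subset_aSet_limPts : aSet X ⊆ aSet (limPts X) := by
  intro x hx
  rw [mem_aSet] at hx ⊢
  intro V hV
  by_contra hxV
  obtain ⟨W, hWX, -, hxW⟩ := hV _ (Zar.isOpen_setOf_notMem x) hxV
  exact hxW (hx W hWX)

lemma finite_setOf_one_le_valuation {j : F} (hj : j ∈ jSet (limPts X)) :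
    {V ∈ X | 1 ≤ V.valuation j}.Finite :=
  Set.finite_inter_of_isClosed_of_forall_not_accPt (Zar.isClosed_setOf_one_le_valuation j)
    fun V hjV hV => not_lt.mpr hjV (mem_jSet.mp hj V (mem_limPts_iff_accPt.mpr hV))

/-- `v (1 + x) < max 1 (v x)` means that `x` is a unit and `1 + x` a nonunit of `v`; then the
next iterate is non-integral, and iterates stay non-integral once they are. So each of the finitely
many `V ∈ X` where `j` is not a nonunit satisfies this inequality for at most one iterate. -/
lemma exists_iterate_valuation_one_add_eq_max {j : F} {W : Zar F} (hW : W.valuation j < 1)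
    (hfin : {V ∈ X | 1 ≤ V.valuation j}.Finite) :
    ∃ k, ∀ V ∈ X, V.valuation (1 + sqDivOneAdd^[k] j) =
      max 1 (V.valuation (sqDivOneAdd^[k] j)) := by
  have hne : ∀ k, 1 + sqDivOneAdd^[k] j ≠ 0 := fun k =>
    W.valuation.one_add_ne_zero (W.valuation.map_iterate_sqDivOneAdd_lt_one hW k)
  set B : ℕ → Set (Zar F) := fun k => {V ∈ X |
    V.valuation (1 + sqDivOneAdd^[k] j) < max 1 (V.valuation (sqDivOneAdd^[k] j))}
  have hB : ∀ k, B k ⊆ {V ∈ X | 1 ≤ V.valuation j} := fun k V ⟨hVX, hV⟩ => by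
    refine ⟨hVX, not_lt.mp fun hj => hV.ne ?_⟩
    have hjk := V.valuation.map_iterate_sqDivOneAdd_lt_one hj k
    rw [Valuation.map_one_add_of_lt _ hjk, max_eq_left hjk.le]
  have hdisj : Pairwise (Disjoint on B) := by
    refine (pairwise_disjoint_on B).mpr fun k l hkl => Set.disjoint_left.mpr ?_
    rintro V ⟨-, hVk⟩ ⟨-, hVl⟩
    have hlarge : 1 < V.valuation (sqDivOneAdd^[l] j) := by
      obtain ⟨d, rfl⟩ := Nat.exists_eq_add_of_lt hkl
      rw [show k + d + 1 = d + (k + 1) by omega, iterate_add_apply, iterate_succ_apply']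
      exact V.valuation.one_lt_map_iterate_sqDivOneAdd
        (V.valuation.one_lt_map_sqDivOneAdd_of_lt_max (hne k) hVk) d
    rw [Valuation.map_add_eq_of_lt_right _ (by simpa), max_eq_right hlarge.le] at hVl
    exact hVl.false
  obtain ⟨k, hk⟩ := Set.exists_eq_empty_of_pairwise_disjoint hfin hB hdisj
  refine ⟨k, fun V hV => (Valuation.map_add _ _ _).antisymm ?_⟩
  rw [Valuation.map_one]
  exact not_lt.mp fun h => (hk ▸ ⟨hV, h⟩ : V ∈ (∅ : Set (Zar F)))

lemma one_le_valuation_of_isUnit {a : ASub X} (ha : IsUnit a) {V : Zar F} (hV : V ∈ X) :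
    1 ≤ V.valuation a := by
  obtain ⟨b, hab⟩ := ha.exists_right_inv
  have ha0 : (a : F) ≠ 0 := fun h => by simpa [h] using congrArg Subtype.val hab
  rw [Valuation.one_le_val_iff _ ha0, inv_eq_of_mul_eq_one_right (congrArg Subtype.val hab)]
  exact Zar.mem_iff_valuation_le_one.mp (mem_ASub.mp b.2 V hV)

lemma not_isLocalRing_ASub {x y : F} (hx : x ∈ ASub X) (hy : y ∈ ASub X) (hxy : x + y = 1)
    {V W : Zar F} (hV : V ∈ X) (hW : W ∈ X) (hxV : V.valuation x < 1)
    (hyW : W.valuation y < 1) : ¬IsLocalRing (ASub X) := fun _ => by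
  rcases IsLocalRing.isUnit_or_isUnit_of_add_one (a := ⟨x, hx⟩) (b := ⟨y, hy⟩)
    (Subtype.ext hxy) with h | h
  · exact (one_le_valuation_of_isUnit h hV).not_gt hxV
  · exact (one_le_valuation_of_isUnit h hW).not_gt hyW

theorem jSet_limPts_subset_ASub (hX : X.Infinite) (hloc : IsLocalRing (ASub X)) :
    jSet (limPts X) ⊆ ASub X := by
  intro j hj
  refine mem_ASub.mpr fun V hV => Zar.mem_iff_valuation_le_one.mpr (not_lt.mp fun hjV => ?_)
  have hfin := finite_setOf_one_le_valuation hj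
  obtain ⟨W, hWX, hW⟩ : ∃ W ∈ X, W.valuation j < 1 := by
    obtain ⟨W, hWX, hW⟩ := (hX.sdiff hfin).nonempty
    exact ⟨W, hWX, not_le.mp fun h => hW ⟨hWX, h⟩⟩
  obtain ⟨k, hk⟩ := exists_iterate_valuation_one_add_eq_max hW hfin
  set m := sqDivOneAdd^[k] j
  have hWm : W.valuation m < 1 := W.valuation.map_iterate_sqDivOneAdd_lt_one hW k
  have hm : 1 + m ≠ 0 := W.valuation.one_add_ne_zero hWm
  exact not_isLocalRing_ASub (x := (1 + m)⁻¹) (y := m * (1 + m)⁻¹)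
    (mem_ASub.mpr fun U hU => Zar.mem_iff_valuation_le_one.mpr
      (U.valuation.map_inv_one_add_le_one (hk U hU)))
    (mem_ASub.mpr fun U hU => Zar.mem_iff_valuation_le_one.mpr
      (U.valuation.map_mul_inv_one_add_le_one (hk U hU)))
    (by rw [← one_add_mul, mul_inv_cancel₀ hm]) hV hWX
    (V.valuation.map_inv_one_add_lt_one (V.valuation.one_lt_map_iterate_sqDivOneAdd hjV k))
    (W.valuation.map_mul_inv_one_add_lt_one hWm)
    hloc

theorem aSet_limPts_subset_of_isCIC (hX : X.Infinite) (hloc : IsLocalRing (ASub X))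
    (hJ : jSet (limPts X) ≠ {0}) {R : Subring F} (hR : IsCIC R)
    (hAR : (ASub X : Set F) ⊆ R) : aSet (limPts X) ⊆ R := by
  obtain ⟨a, haJ, ha0⟩ := exists_ne_zero_mem_jSet hJ
  have hJR : jSet (limPts X) ⊆ R := (jSet_limPts_subset_ASub hX hloc).trans hAR
  intro t ht
  have htn : ∀ n : ℕ, t ^ n ∈ aSet (limPts X) := fun n => by
    rw [← coe_ASub] at ht ⊢
    exact pow_mem ht n
  exact hR t ⟨a, hJR haJ, ha0, fun n _ => hJR (mul_mem_jSet haJ (htn n))⟩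

theorem stmt10 (X : Set (Zar F)) (hX : X.Infinite) (hloc : IsLocalRing (ASub X))
    (hJ : jSet (limPts X) ≠ {0}) (R : Subring F) (hR : IsCIC R)
    (hAR : (ASub X : Set F) ⊆ (R : Set F)) :
    aSet (limPts X) ⊆ (R : Set F) ∧ (IsCIC (ASub X) → aSet X = aSet (limPts X)) := by
  refine ⟨aSet_limPts_subset_of_isCIC hX hloc hJ hR hAR, fun hA => ?_⟩
  exact aSet_subset_aSet_limPts.antisymm
    ((aSet_limPts_subset_of_isCIC hX hloc hJ hA subset_rfl).trans coe_ASub.subset)
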